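/- Let R > 0 and let π ≥ β ≥ γ ≥ δ ≥ ε ≥ 0. Set A = (−R, 0), B = P_R(β), C = P_R(γ), D = P_R(δ), E = P_R(ε), F = (R, 0), so that ABCDEF is a hexagon inscribed in the upper semicircle with the side AF as diameter of length 2R. Writing a = dist A B, b = dist B C, c = dist C D, d = dist D E, e = dist E F for the sides, and y = dist A C, z = dist C F, u = dist A D, x = dist D F for the diagonals, one has 4R² = a² + b² + c² + d² + e² + (a·b·z + y·c·x + u·d·e)/R. -/

import Mathlib

noncomputable def P (R θ : ℝ) : EuclideanSpace ℝ (Fin 2) :=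
  (WithLp.equiv 2 (Fin 2 → ℝ)).symm ![R * Real.cos θ, R * Real.sin θ]

/-! In a semicircle with diameter `AF`, the law of cosines in a triangle `A X Y` (with `X` between
`A` and `Y` on the arc) reads `AY² = AX² + XY² + AX·XY·YF/R`: the angle at `X` is supplementary to
the inscribed angle at `F` of the cyclic quadrilateral `AXYF`, and the cosine of that angle is
`YF / AF` because `AF` is a diameter. Applying this to the triangles `ABC`, `ACD` and `ADE` and
finishing with Thales' theorem `AE² + EF² = AF²` telescopes to the identity. -/

open Real

lemma dist_P_sq (R θ φ : ℝ) : dist (P R θ) (P R φ) ^ 2 = (2 * R * sin ((θ - φ) / 2)) ^ 2 := by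
  rw [EuclideanSpace.dist_eq, sq_sqrt (by positivity)]
  simp only [P, Fin.sum_univ_two, Real.dist_eq, sq_abs, WithLp.equiv_symm_apply,
    Matrix.cons_val_zero, Matrix.cons_val_one]
  have half := sin_sq_eq_half_sub ((θ - φ) / 2)
  rw [show 2 * ((θ - φ) / 2) = θ - φ by ring] at half
  linear_combination R ^ 2 * sin_sq_add_cos_sq θ + R ^ 2 * sin_sq_add_cos_sq φ - 4 * R ^ 2 * half
    + 2 * R ^ 2 * cos_sub θ φ

lemma dist_P_of_le {R θ φ : ℝ} (hR : 0 ≤ R) (hφθ : φ ≤ θ) (hθφ : θ ≤ φ + 2 * π) :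
    dist (P R θ) (P R φ) = 2 * R * sin ((θ - φ) / 2) := by
  have hsin : 0 ≤ sin ((θ - φ) / 2) := sin_nonneg_of_nonneg_of_le_pi (by linarith) (by linarith)
  rw [← sqrt_sq dist_nonneg, dist_P_sq, sqrt_sq (by positivity)]

lemma dist_P_pi_sq_add_dist_P_zero_sq (R θ : ℝ) :
    dist (P R π) (P R θ) ^ 2 + dist (P R θ) (P R 0) ^ 2 = (2 * R) ^ 2 := by
  rw [dist_P_sq, dist_P_sq, sub_zero, show (π - θ) / 2 = π / 2 - θ / 2 by ring, sin_pi_div_two_sub]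
  linear_combination 4 * R ^ 2 * sin_sq_add_cos_sq (θ / 2)

lemma cos_sq_eq_cos_sq_add_sin_sub_sq (p q : ℝ) :
    cos q ^ 2 = cos p ^ 2 + sin (p - q) ^ 2 + 2 * cos p * sin (p - q) * sin q := by
  linear_combination (-(sin (p - q) + sin p * cos q - cos p * sin q + 2 * cos p * sin q)) *
      sin_sub p q - cos q ^ 2 * sin_sq_add_cos_sq p + cos p ^ 2 * sin_sq_add_cos_sq q

lemma dist_P_pi_sq_eq_add_mul_div {R s t : ℝ} (hR : 0 < R) (ht : 0 ≤ t) (hts : t ≤ s)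
    (hs : s ≤ π) :
    dist (P R π) (P R t) ^ 2 = dist (P R π) (P R s) ^ 2 + dist (P R s) (P R t) ^ 2 +
      dist (P R π) (P R s) * dist (P R s) (P R t) * dist (P R t) (P R 0) / R := by
  have hπ := pi_pos
  rw [dist_P_sq, dist_P_of_le hR.le hs (by linarith), dist_P_of_le hR.le hts (by linarith),
    dist_P_of_le hR.le ht (by linarith), sub_zero, sub_div, sub_div π, sin_pi_div_two_sub, sin_pi_div_two_sub]
  field_simp
  rw [sub_div s]
  exact cos_sq_eq_cos_sq_add_sin_sub_sq (s / 2) (t / 2)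

theorem hexagon_pythagoras (R β γ δ ε : ℝ) (hR : 0 < R)
    (hε : 0 ≤ ε) (hδε : ε ≤ δ) (hγδ : δ ≤ γ) (hβγ : γ ≤ β) (hβ : β ≤ Real.pi)
    (A B C D E F : EuclideanSpace ℝ (Fin 2))
    (hA : A = P R Real.pi) (hB : B = P R β) (hC : C = P R γ)
    (hD : D = P R δ) (hE : E = P R ε) (hF : F = P R 0)
    (a b c d e y z u x : ℝ)
    (ha : a = dist A B) (hb : b = dist B C) (hc : c = dist C D)
    (hd : d = dist D E) (he : e = dist E F)
    (hy : y = dist A C) (hz : z = dist C F) (hu : u = dist A D) (hx : x = dist D F) :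
    4 * R ^ 2 =
      a ^ 2 + b ^ 2 + c ^ 2 + d ^ 2 + e ^ 2 +
        (a * b * z + y * c * x + u * d * e) / R := by
  subst hA hB hC hD hE hF ha hb hc hd he hy hz hu hx
  have hABC := dist_P_pi_sq_eq_add_mul_div hR (hε.trans (hδε.trans hγδ)) hβγ hβ
  have hACD := dist_P_pi_sq_eq_add_mul_div hR (hε.trans hδε) hγδ (hβγ.trans hβ)
  have hADE := dist_P_pi_sq_eq_add_mul_div hR hε hδε (hγδ.trans (hβγ.trans hβ))
  have hAEF := dist_P_pi_sq_add_dist_P_zero_sq R ε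
  linear_combination hABC + hACD + hADE - hAEF
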